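/- Let σ be a finite signed measure on 𝕋, let η ∈ (0,1), and let σ̃ = ½((τ_η)#σ + (τ_{−η})#σ), where τ_η : 𝕋 → 𝕋 is translation by η. Then: (i) for every k ∈ ℤ, (σ̃)̂_k = cos(2πkη) σ̂_k; (ii) for every s ∈ (0,1), as an identity in [0,∞], ‖σ‖²_{Ḣ^{−s}} = ‖σ̃‖²_{Ḣ^{−s}} + ∑_{k ≠ 0} |k|^{−2s} sin²(2πkη) |σ̂_k|²; and (iii) ∑_{k ≠ 0} |k|^{−2s} sin²(2πkη) |σ̂_k|² ≥ 16 η² ∑_{k ∈ ℤ, 0 < |k| ≤ 1/(4η)} |k|^{2−2s} |σ̂_k|². (Fourier identities and coercivity estimate used in the first-variation argument of Lemma 3.7.) -/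

import Mathlib

open MeasureTheory
open scoped ENNReal

/-- The `k`-th Fourier coefficient of a finite signed measure on the circle. -/
noncomputable def sfc (σ : SignedMeasure UnitAddCircle) (k : ℤ) : ℂ :=
  (∫ x, fourier k x ∂σ.toJordanDecomposition.posPart) -
    (∫ x, fourier k x ∂σ.toJordanDecomposition.negPart)

/-- The symmetrized translate `σ̃ = ½((τ_η)#σ + (τ_{-η})#σ)` of a signed measure on the circle,
where `τ_η` is translation by `η`. -/
noncomputable def tildeSM (σ : SignedMeasure UnitAddCircle) (η : ℝ) :
    SignedMeasure UnitAddCircle :=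
  (2⁻¹ : ℝ) •
    (MeasureTheory.VectorMeasure.map σ (fun x => x + ((η : ℝ) : UnitAddCircle)) +
      MeasureTheory.VectorMeasure.map σ (fun x => x - ((η : ℝ) : UnitAddCircle)))

open Real
open scoped NNReal

namespace Stmt14Aux

lemma fourier_integrable (k : ℤ) (μ : Measure UnitAddCircle) [IsFiniteMeasure μ] :
    Integrable (fun x => (fourier k x : ℂ)) μ :=
  (map_continuous (fourier k)).integrable_of_hasCompactSupport
    (isClosed_tsupport _).isCompact

lemma sfc_repr {μ ν : Measure UnitAddCircle} [IsFiniteMeasure μ] [IsFiniteMeasure ν]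
    {σ : SignedMeasure UnitAddCircle}
    (h : σ = μ.toSignedMeasure - ν.toSignedMeasure) (k : ℤ) :
    sfc σ k = (∫ x, fourier k x ∂μ) - ∫ x, fourier k x ∂ν := by
  have h2 : σ.toJordanDecomposition.posPart.toSignedMeasure
      - σ.toJordanDecomposition.negPart.toSignedMeasure
      = μ.toSignedMeasure - ν.toSignedMeasure := by
    rw [← h]
    exact σ.toSignedMeasure_toJordanDecomposition
  have h3 : σ.toJordanDecomposition.posPart + ν = μ + σ.toJordanDecomposition.negPart := by
    rw [← Measure.toSignedMeasure_eq_toSignedMeasure_iff, Measure.toSignedMeasure_add,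
      Measure.toSignedMeasure_add]
    exact sub_eq_sub_iff_add_eq_add.mp h2
  have h4 := congrArg (fun m : Measure UnitAddCircle => ∫ x, (fourier k x : ℂ) ∂m) h3
  rw [integral_add_measure (fourier_integrable k _) (fourier_integrable k _),
    integral_add_measure (fourier_integrable k _) (fourier_integrable k _)] at h4
  rw [sfc]
  linear_combination h4

lemma sigma_apply (σ : SignedMeasure UnitAddCircle) {A : Set UnitAddCircle}
    (hA : MeasurableSet A) :
    σ A = (σ.toJordanDecomposition.posPart A).toReal
      - (σ.toJordanDecomposition.negPart A).toReal := by
  conv_lhs => rw [← σ.toSignedMeasure_toJordanDecomposition]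
  exact Measure.toSignedMeasure_sub_apply hA

lemma tildeSM_repr (σ : SignedMeasure UnitAddCircle) (η : ℝ) :
    tildeSM σ η
      = ((2 : ℝ≥0)⁻¹ • (σ.toJordanDecomposition.posPart.map (fun x => x + ((η:ℝ):UnitAddCircle))
          + σ.toJordanDecomposition.posPart.map (fun x => x - ((η:ℝ):UnitAddCircle)))).toSignedMeasure
        - ((2 : ℝ≥0)⁻¹ • (σ.toJordanDecomposition.negPart.map (fun x => x + ((η:ℝ):UnitAddCircle))
          + σ.toJordanDecomposition.negPart.map (fun x => x - ((η:ℝ):UnitAddCircle)))).toSignedMeasure := by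
  set η' : UnitAddCircle := ((η : ℝ) : UnitAddCircle)
  have hτ : Measurable fun x : UnitAddCircle => x + η' :=
    (continuous_id.add continuous_const).measurable
  have hτ' : Measurable fun x : UnitAddCircle => x - η' :=
    (continuous_id.sub continuous_const).measurable
  set P := σ.toJordanDecomposition.posPart
  set N := σ.toJordanDecomposition.negPart
  haveI : IsFiniteMeasure (P.map fun x => x + η') := P.isFiniteMeasure_map _
  haveI : IsFiniteMeasure (P.map fun x => x - η') := P.isFiniteMeasure_map _
  haveI : IsFiniteMeasure (N.map fun x => x + η') := N.isFiniteMeasure_map _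
  haveI : IsFiniteMeasure (N.map fun x => x - η') := N.isFiniteMeasure_map _
  ext i hi
  rw [Measure.toSignedMeasure_sub_apply hi]
  rw [tildeSM, VectorMeasure.smul_apply, VectorMeasure.add_apply,
    VectorMeasure.map_apply _ hτ hi, VectorMeasure.map_apply _ hτ' hi,
    sigma_apply σ (hτ hi), sigma_apply σ (hτ' hi)]
  rw [measureReal_def, measureReal_def, Measure.smul_apply, Measure.smul_apply, Measure.add_apply, Measure.add_apply,
    Measure.map_apply hτ hi, Measure.map_apply hτ' hi,
    Measure.map_apply hτ hi, Measure.map_apply hτ' hi]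
  simp only [ENNReal.smul_def, smul_eq_mul, ENNReal.toReal_mul]
  rw [ENNReal.toReal_add (measure_ne_top _ _) (measure_ne_top _ _),
    ENNReal.toReal_add (measure_ne_top _ _) (measure_ne_top _ _)]
  simp only [ENNReal.coe_inv, ENNReal.coe_ofNat, ENNReal.toReal_inv, ENNReal.toReal_ofNat,
    two_ne_zero, ne_eq, not_false_iff]
  ring

lemma fourier_translate {T : ℝ} (k : ℤ) (x y : AddCircle T) :
    fourier k (x + y) = fourier k x * fourier k y := by
  simp only [fourier_apply, zsmul_add, AddCircle.toCircle_add, Circle.coe_mul]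

lemma fourier_eta (k : ℤ) (η : ℝ) :
    (fourier k ((η : ℝ) : UnitAddCircle) : ℂ) = Complex.exp ((2 * π * k * η : ℝ) * Complex.I) := by
  rw [fourier_coe_apply]
  push_cast
  ring_nf

lemma half_add_exp (k : ℤ) (η : ℝ) :
    (2⁻¹ : ℝ) • (Complex.exp ((2 * π * k * η : ℝ) * Complex.I)
        + Complex.exp ((2 * π * k * (-η) : ℝ) * Complex.I))
      = ((Real.cos (2 * π * k * η) : ℝ) : ℂ) := by
  rw [Complex.ofReal_cos, Complex.cos, Complex.real_smul]
  push_cast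
  ring_nf

lemma part_i (σ : SignedMeasure UnitAddCircle) (η : ℝ) (k : ℤ) :
    sfc (tildeSM σ η) k = ((Real.cos (2 * π * k * η) : ℝ) : ℂ) * sfc σ k := by
  set η' : UnitAddCircle := ((η : ℝ) : UnitAddCircle) with hη'
  have hτ : Measurable fun x : UnitAddCircle => x + η' :=
    (continuous_id.add continuous_const).measurable
  have hτ' : Measurable fun x : UnitAddCircle => x - η' :=
    (continuous_id.sub continuous_const).measurable
  have hmap : ∀ (μ : Measure UnitAddCircle), IsFiniteMeasure μ →
      (∫ x, fourier k x ∂((2 : ℝ≥0)⁻¹ • (μ.map (fun x => x + η') + μ.map (fun x => x - η'))))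
        = (2⁻¹ : ℝ) • ((fourier k η' + fourier k (-η') : ℂ) * ∫ x, fourier k x ∂μ) := by
    intro μ hfin
    haveI := hfin
    haveI : IsFiniteMeasure (μ.map fun x => x + η') := μ.isFiniteMeasure_map _
    haveI : IsFiniteMeasure (μ.map fun x => x - η') := μ.isFiniteMeasure_map _
    rw [integral_smul_nnreal_measure,
      integral_add_measure (fourier_integrable k _) (fourier_integrable k _),
      integral_map hτ.aemeasurable (map_continuous (fourier k)).aestronglyMeasurable,
      integral_map hτ'.aemeasurable (map_continuous (fourier k)).aestronglyMeasurable]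
    simp_rw [sub_eq_add_neg, fourier_translate k _ η', fourier_translate k _ (-η')]
    rw [integral_mul_const, integral_mul_const, NNReal.smul_def]
    push_cast
    ring
  haveI : IsFiniteMeasure (σ.toJordanDecomposition.posPart.map fun x => x + η') :=
    Measure.isFiniteMeasure_map _ _
  haveI : IsFiniteMeasure (σ.toJordanDecomposition.posPart.map fun x => x - η') :=
    Measure.isFiniteMeasure_map _ _
  haveI : IsFiniteMeasure (σ.toJordanDecomposition.negPart.map fun x => x + η') :=
    Measure.isFiniteMeasure_map _ _
  haveI : IsFiniteMeasure (σ.toJordanDecomposition.negPart.map fun x => x - η') :=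
    Measure.isFiniteMeasure_map _ _
  rw [sfc_repr (tildeSM_repr σ η) k, hmap _ inferInstance, hmap _ inferInstance]
  have hneg : (-η' : UnitAddCircle) = ((-η : ℝ) : UnitAddCircle) := rfl
  rw [← smul_sub, ← mul_sub, hη', hneg, fourier_eta, fourier_eta, ← smul_mul_assoc,
    half_add_exp, sfc]

lemma nnnorm_sq_real_mul (c : ℝ) (z : ℂ) :
    ((‖((c : ℝ) : ℂ) * z‖₊ : ℝ≥0∞)) ^ 2 = ENNReal.ofReal (c ^ 2) * (‖z‖₊ : ℝ≥0∞) ^ 2 := by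
  rw [nnnorm_mul, ENNReal.coe_mul, mul_pow]
  congr 1
  rw [Complex.nnnorm_real, ← enorm_eq_nnnorm, Real.enorm_eq_ofReal_abs, ← ENNReal.ofReal_pow (abs_nonneg c), sq_abs]

lemma enn_split (A B : ℝ≥0∞) (c s : ℝ) (h : c ^ 2 + s ^ 2 = 1) :
    A * B = A * (ENNReal.ofReal (c ^ 2) * B) + A * ENNReal.ofReal (s ^ 2) * B := by
  have h1 : ENNReal.ofReal (c ^ 2) + ENNReal.ofReal (s ^ 2) = 1 := by
    rw [← ENNReal.ofReal_add (sq_nonneg c) (sq_nonneg s), h, ENNReal.ofReal_one]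
  calc A * B = A * ((ENNReal.ofReal (c ^ 2) + ENNReal.ofReal (s ^ 2)) * B) := by rw [h1, one_mul]
  _ = _ := by ring

lemma sin_bound (η : ℝ) (hη0 : 0 < η) (k : ℤ) (hk : k ≠ 0)
    (hk4 : (k.natAbs : ℝ) ≤ 1 / (4 * η)) :
    16 * η ^ 2 * (k.natAbs : ℝ) ^ 2 ≤ Real.sin (2 * π * k * η) ^ 2 := by
  have habs : (k.natAbs : ℝ) = |(k : ℝ)| := by
    rw [Nat.cast_natAbs, Int.cast_abs]
  rw [habs] at hk4 ⊢
  set n : ℝ := |(k : ℝ)| with hn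
  have hn1 : (1 : ℝ) ≤ n := by
    rw [hn, le_abs]
    rcases Int.lt_or_lt_of_ne hk with h | h
    · right; have : (k:ℝ) ≤ -1 := by exact_mod_cast Int.le_sub_one_of_lt h
      linarith
    · left; exact_mod_cast h
  have hsq : Real.sin (2 * π * k * η) ^ 2 = Real.sin (2 * π * n * η) ^ 2 := by
    rcases abs_cases (k : ℝ) with ⟨h1, _⟩ | ⟨h1, _⟩
    · rw [hn, h1]
    · rw [hn, h1, show 2 * π * -(k : ℝ) * η = -(2 * π * k * η) by ring, Real.sin_neg, neg_sq]
  have hnη : n * η ≤ 1 / 4 := by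
    rw [le_div_iff₀ (by positivity)] at hk4
    nlinarith
  have hx0 : 0 ≤ 2 * π * n * η := by positivity
  have hx2 : 2 * π * n * η ≤ π / 2 := by nlinarith [pi_pos]
  have hs := Real.mul_le_sin hx0 hx2
  have h4 : 4 * n * η ≤ Real.sin (2 * π * n * η) := by
    have hπ : (π : ℝ) ≠ 0 := pi_ne_zero
    calc 4 * n * η = 2 / π * (2 * π * n * η) := by field_simp; ring
    _ ≤ _ := hs
  have hsqle := mul_self_le_mul_self (by positivity : (0:ℝ) ≤ 4 * n * η) h4
  rw [hsq]
  nlinarith [hsqle]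

lemma enn_point (η s : ℝ) (hη0 : 0 < η) (k : ℤ) (hk : k ≠ 0)
    (hk4 : (k.natAbs : ℝ) ≤ 1 / (4 * η)) (B : ℝ≥0∞) :
    ENNReal.ofReal (16 * η ^ 2) * ((k.natAbs : ℝ≥0∞) ^ (2 - 2 * s) * B)
      ≤ (k.natAbs : ℝ≥0∞) ^ (-(2 * s)) * ENNReal.ofReal (Real.sin (2 * π * k * η) ^ 2) * B := by
  have hnpos : (0 : ℝ) < (k.natAbs : ℝ) := by
    exact_mod_cast Int.natAbs_pos.mpr hk
  have hn0 : ((k.natAbs : ℝ≥0∞)) ≠ 0 := by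
    exact_mod_cast (Int.natAbs_pos.mpr hk).ne'
  have hnt : ((k.natAbs : ℝ≥0∞)) ≠ ⊤ := ENNReal.natCast_ne_top _
  have hsplit : (k.natAbs : ℝ≥0∞) ^ (2 - 2 * s)
      = (k.natAbs : ℝ≥0∞) ^ ((2 : ℝ)) * (k.natAbs : ℝ≥0∞) ^ (-(2 * s)) := by
    rw [show (2:ℝ) - 2 * s = 2 + -(2 * s) by ring, ENNReal.rpow_add _ _ hn0 hnt]
  have h2 : (k.natAbs : ℝ≥0∞) ^ ((2 : ℝ)) = ENNReal.ofReal ((k.natAbs : ℝ) ^ 2) := by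
    rw [← ENNReal.ofReal_natCast, ENNReal.ofReal_rpow_of_pos hnpos]
    norm_num [Real.rpow_natCast]
  have hsin : (16 * η ^ 2) * (k.natAbs : ℝ) ^ 2 ≤ Real.sin (2 * π * k * η) ^ 2 :=
    sin_bound η hη0 k hk hk4
  calc ENNReal.ofReal (16 * η ^ 2) * ((k.natAbs : ℝ≥0∞) ^ (2 - 2 * s) * B)
      = ENNReal.ofReal (16 * η ^ 2) * ENNReal.ofReal ((k.natAbs : ℝ) ^ 2)
          * ((k.natAbs : ℝ≥0∞) ^ (-(2 * s)) * B) := by rw [hsplit, h2]; ring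
    _ = ENNReal.ofReal (16 * η ^ 2 * (k.natAbs : ℝ) ^ 2)
          * ((k.natAbs : ℝ≥0∞) ^ (-(2 * s)) * B) := by
        rw [← ENNReal.ofReal_mul (by positivity)]
    _ ≤ ENNReal.ofReal (Real.sin (2 * π * k * η) ^ 2)
          * ((k.natAbs : ℝ≥0∞) ^ (-(2 * s)) * B) :=
        mul_le_mul_left (ENNReal.ofReal_le_ofReal hsin) _
    _ = _ := by ring

end Stmt14Aux

/-- For a finite signed measure `σ` on `𝕋`, `η ∈ (0,1)` and
`σ̃ = ½((τ_η)#σ + (τ_{-η})#σ)`: (i) `(σ̃)̂_k = cos(2πkη) σ̂_k`; (ii) for `s ∈ (0,1)`,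
`‖σ‖²_{Ḣ^{-s}} = ‖σ̃‖²_{Ḣ^{-s}} + ∑_{k≠0} |k|^{-2s} sin²(2πkη) |σ̂_k|²`; and (iii) this last sum
is at least `16 η² ∑_{0<|k|≤1/(4η)} |k|^{2-2s} |σ̂_k|²`. -/
theorem stmt14 (σ : SignedMeasure UnitAddCircle) (η : ℝ) (hη : η ∈ Set.Ioo (0 : ℝ) 1)
    (s : ℝ) (hs : s ∈ Set.Ioo (0 : ℝ) 1) :
    (∀ k : ℤ, sfc (tildeSM σ η) k = (Real.cos (2 * Real.pi * k * η) : ℂ) * sfc σ k) ∧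
    ((∑' k : ℤ, if k = 0 then 0 else
        (k.natAbs : ℝ≥0∞) ^ (-(2 * s)) * (‖sfc σ k‖₊ : ℝ≥0∞) ^ 2)
      = (∑' k : ℤ, if k = 0 then 0 else
          (k.natAbs : ℝ≥0∞) ^ (-(2 * s)) * (‖sfc (tildeSM σ η) k‖₊ : ℝ≥0∞) ^ 2)
        + ∑' k : ℤ, if k = 0 then 0 else
            (k.natAbs : ℝ≥0∞) ^ (-(2 * s)) *
              ENNReal.ofReal (Real.sin (2 * Real.pi * k * η) ^ 2) *
                (‖sfc σ k‖₊ : ℝ≥0∞) ^ 2) ∧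
    (ENNReal.ofReal (16 * η ^ 2) *
        ∑' k : ℤ, if k ≠ 0 ∧ (k.natAbs : ℝ) ≤ 1 / (4 * η) then
          (k.natAbs : ℝ≥0∞) ^ (2 - 2 * s) * (‖sfc σ k‖₊ : ℝ≥0∞) ^ 2 else 0)
      ≤ ∑' k : ℤ, if k = 0 then 0 else
          (k.natAbs : ℝ≥0∞) ^ (-(2 * s)) *
            ENNReal.ofReal (Real.sin (2 * Real.pi * k * η) ^ 2) *
              (‖sfc σ k‖₊ : ℝ≥0∞) ^ 2 := by
  obtain ⟨hη0, hη1⟩ := hη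
  refine ⟨fun k => Stmt14Aux.part_i σ η k, ?_, ?_⟩
  · rw [← ENNReal.tsum_add]
    refine tsum_congr fun k => ?_
    by_cases hk : k = 0
    · simp [hk]
    · simp only [if_neg hk]
      rw [Stmt14Aux.part_i σ η k, Stmt14Aux.nnnorm_sq_real_mul]
      exact Stmt14Aux.enn_split _ _ _ _ (Real.cos_sq_add_sin_sq _)
  · rw [← ENNReal.tsum_mul_left]
    refine ENNReal.tsum_le_tsum fun k => ?_
    by_cases hcond : k ≠ 0 ∧ (k.natAbs : ℝ) ≤ 1 / (4 * η)
    · rw [if_pos hcond, if_neg hcond.1]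
      exact Stmt14Aux.enn_point η s hη0 k hcond.1 hcond.2 _
    · rw [if_neg hcond, mul_zero]
      exact zero_le
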